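/- Let φ be a primitive nonerasing substitution on a finite alphabet A, prolongable over a letter a, and let ψ : A → List B be a nonerasing morphism such that the infinite word H obtained by applying ψ to φ^∞(a) is not eventually periodic. Then there exist P ≥ 1 and K with 0 < K < 1 such that: (i) for all factors u₁, u₂ of H, if u₂.length ≥ P · u₁.length then u₁ is a factor of u₂; and (ii) for every factor u of H, any two distinct starting positions i ≠ j of occurrences of u in H satisfy |i − j| ≥ K · u.length. -/

import Mathlib

/-- Extension of a morphism `φ : A → List B` to finite words: `φ†(w) = (w.map φ).flatten`. -/
def applyMorph {A B : Type*} (φ : A → List B) (w : List A) : List B :=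
  (w.map φ).flatten

/-- The finite word `v` occurs in the infinite word `W` at starting position `i`. -/
def OccursAt {A : Type*} (v : List A) (W : ℕ → A) (i : ℕ) : Prop :=
  ∀ (j : ℕ) (hj : j < v.length), W (i + j) = v.get ⟨j, hj⟩

/-- The finite word `v` is a factor of the infinite word `W`. -/
def FactorOf {A : Type*} (v : List A) (W : ℕ → A) : Prop :=
  ∃ i, OccursAt v W i

/-- The finite word `v` is a prefix of the infinite word `W`. -/
def PrefixOf {A : Type*} (v : List A) (W : ℕ → A) : Prop :=
  OccursAt v W 0

/-- `W` is uniformly recurrent. -/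
def UniformlyRecurrent {A : Type*} (W : ℕ → A) : Prop :=
  ∀ u, FactorOf u W → ∃ N, ∀ v, FactorOf v W → v.length = N → u <:+: v

/-- `W` is eventually periodic. -/
def EventuallyPeriodic {A : Type*} (W : ℕ → A) : Prop :=
  ∃ k t : ℕ, 1 ≤ t ∧ ∀ i, k ≤ i → W (i + t) = W i

/-- The substitution `φ` is prolongable over the letter `a₁`. -/
def Prolongable {A : Type*} (φ : A → List A) (a₁ : A) : Prop :=
  ∃ v, φ a₁ = a₁ :: v ∧ ∀ k : ℕ, (applyMorph φ)^[k] v ≠ []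

/-- The morphism `φ` is nonerasing. -/
def Nonerasing {A B : Type*} (φ : A → List B) : Prop :=
  ∀ a, φ a ≠ []

/-- `X` is the fixed point `φ^∞(a₁)`: every `φ^n([a₁])` is a prefix of `X`. -/
def IsFixedPoint {A : Type*} (φ : A → List A) (a₁ : A) (X : ℕ → A) : Prop :=
  ∀ n : ℕ, PrefixOf ((applyMorph φ)^[n] [a₁]) X

/-- `W` is the infinite word `ψ(φ^∞(a₁))`: the words `ψ(φ^n([a₁]))` have unbounded
length and each of them is a prefix of `W`. -/
def IsMorphicWord {A B : Type*} (φ : A → List A) (ψ : A → List B) (a₁ : A)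
    (W : ℕ → B) : Prop :=
  (∀ N : ℕ, ∃ k : ℕ, N ≤ (applyMorph ψ ((applyMorph φ)^[k] [a₁])).length) ∧
  ∀ k : ℕ, PrefixOf (applyMorph ψ ((applyMorph φ)^[k] [a₁])) W

/-- The letter `a` is `φ`-growing: `n ↦ (φ^n [a]).length` is unbounded. -/
def GrowingLetter {A : Type*} (φ : A → List A) (a : A) : Prop :=
  ∀ N : ℕ, ∃ n : ℕ, N ≤ ((applyMorph φ)^[n] [a]).length

/-- The finite word `w` is `φ`-bounded: the sequence `n ↦ φ^n(w)` is eventually periodic. -/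
def PhiBounded {A : Type*} (φ : A → List A) (w : List A) : Prop :=
  ∃ n₀ p : ℕ, 1 ≤ p ∧ ∀ n, n₀ ≤ n → (applyMorph φ)^[n + p] w = (applyMorph φ)^[n] w

/-- Letter `a` has growth order `(d, θ)` with respect to `φ`. -/
def HasGrowthOrder {A : Type*} (φ : A → List A) (a : A) (d : ℕ) (θ : ℝ) : Prop :=
  1 ≤ θ ∧ ∃ c C : ℝ, 0 < c ∧ c ≤ C ∧ ∀ n : ℕ, 1 ≤ n →
    c * (n : ℝ) ^ d * θ ^ n ≤ (((applyMorph φ)^[n] [a]).length : ℝ) ∧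
    (((applyMorph φ)^[n] [a]).length : ℝ) ≤ C * (n : ℝ) ^ d * θ ^ n

/-- The substitution `φ` is primitive. -/
def PrimitiveSubst {A : Type*} (φ : A → List A) : Prop :=
  ∃ k : ℕ, 1 ≤ k ∧ ∀ a b : A, b ∈ (applyMorph φ)^[k] [a]

/-- `v` is a cyclic shift of `u`. -/
def IsCyclicShift {A : Type*} (v u : List A) : Prop :=
  ∃ x y : List A, u = x ++ y ∧ v = y ++ x

/-- `W` is purely periodic with (nonempty) period `u`. -/
def PurelyPeriodicWith {A : Type*} (W : ℕ → A) (u : List A) : Prop :=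
  ∃ hu : u ≠ [], ∀ i : ℕ, W i = u.get ⟨i % u.length, Nat.mod_lt i (List.length_pos_of_ne_nil hu)⟩

/-- `W` is recurrent: every factor occurs at arbitrarily large starting positions. -/
def RecurrentWord {A : Type*} (W : ℕ → A) : Prop :=
  ∀ u, FactorOf u W → ∀ N : ℕ, ∃ i, N ≤ i ∧ OccursAt u W i

/-- The letter `a` is recurrent: it occurs in some `φ^k [a]`, `k ≥ 1`. -/
def RecurrentLetter {A : Type*} (φ : A → List A) (a : A) : Prop :=
  ∃ k : ℕ, 1 ≤ k ∧ a ∈ (applyMorph φ)^[k] [a]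

/-!
Write `θₙ = blockMorph φ ψ n` for the morphism `b ↦ ψ(φⁿ b)`. Primitivity bounds the ratios of the
lengths of the blocks `θₙ b` uniformly in `n`, so for each `ℓ` there is a level `n` at which every
block has length between `ℓ` and `C ℓ`. A factor `u₁` of length `ℓ` then lies in the `θₙ`-image of
a factor of length at most two of the language of `φ`; these finitely many words all occur in every
`φᴷ b` for one fixed `K`, so `u₁` lies in every block of level `n + K`, and any factor longer than
two such blocks contains one of them, hence `u₁`.

Two occurrences of `u` at distance `t` make `u` `t`-periodic. If `t` is small compared with `|u|`,
linear recurrence puts every factor of length `t + 1` inside `u`, so the whole word would be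
`t`-periodic.
-/

section Morphism

variable {A B C : Type*}

@[simp]
theorem applyMorph_nil (f : A → List B) : applyMorph f [] = [] := rfl

@[simp]
theorem applyMorph_cons (f : A → List B) (b : A) (w : List A) :
    applyMorph f (b :: w) = f b ++ applyMorph f w := rfl

@[simp]
theorem applyMorph_singleton (f : A → List B) (b : A) : applyMorph f [b] = f b := by
  simp [applyMorph]

@[simp]
theorem applyMorph_append (f : A → List B) (x y : List A) :
    applyMorph f (x ++ y) = applyMorph f x ++ applyMorph f y := by
  simp [applyMorph]

theorem applyMorph_applyMorph (f : B → List C) (g : A → List B) (w : List A) :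
    applyMorph f (applyMorph g w) = applyMorph (fun b => applyMorph f (g b)) w := by
  induction w with
  | nil => rfl
  | cons b w ih => simp [ih]

theorem iterate_applyMorph (φ : A → List A) (n : ℕ) (w : List A) :
    (applyMorph φ)^[n] w = applyMorph (fun b => (applyMorph φ)^[n] [b]) w := by
  induction n generalizing w with
  | zero => induction w with
    | nil => rfl
    | cons b w ih => simpa using ih
  | succ n ih => simp only [Function.iterate_succ_apply', ih w, applyMorph_applyMorph]

theorem applyMorph_infix {f : A → List B} {v w : List A} (h : v <:+: w) :
    applyMorph f v <:+: applyMorph f w := by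
  obtain ⟨s, t, rfl⟩ := h
  exact ⟨applyMorph f s, applyMorph f t, by simp⟩

theorem iterate_applyMorph_infix (φ : A → List A) (n : ℕ) {v w : List A} (h : v <:+: w) :
    (applyMorph φ)^[n] v <:+: (applyMorph φ)^[n] w := by
  rw [iterate_applyMorph, iterate_applyMorph φ n w]
  exact applyMorph_infix h

theorem length_applyMorph_le {f : A → List B} {M : ℕ} (hM : ∀ b, (f b).length ≤ M)
    (w : List A) : (applyMorph f w).length ≤ M * w.length := by
  induction w with
  | nil => simp
  | cons b w ih =>
    simp only [applyMorph_cons, List.length_append, List.length_cons]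
    linarith [hM b]

theorem length_iterate_applyMorph_le {φ : A → List A} {M : ℕ} (hM : ∀ b, (φ b).length ≤ M)
    (n : ℕ) (w : List A) : ((applyMorph φ)^[n] w).length ≤ M ^ n * w.length := by
  induction n with
  | zero => simp
  | succ n ih =>
    rw [Function.iterate_succ_apply', pow_succ', mul_assoc]
    exact (length_applyMorph_le hM _).trans (Nat.mul_le_mul_left M ih)

theorem Nonerasing.length_le {f : A → List B} (hf : Nonerasing f) (w : List A) :
    w.length ≤ (applyMorph f w).length := by
  induction w with
  | nil => simp
  | cons b w ih =>
    simp only [applyMorph_cons, List.length_append, List.length_cons]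
    linarith [List.length_pos_iff.mpr (hf b)]

theorem Nonerasing.iterate_ne_nil {φ : A → List A} (hφ : Nonerasing φ) (n : ℕ) {w : List A}
    (hw : w ≠ []) : (applyMorph φ)^[n] w ≠ [] := by
  induction n with
  | zero => exact hw
  | succ n ih =>
    rw [Function.iterate_succ_apply', ← List.length_pos_iff]
    exact (List.length_pos_iff.mpr ih).trans_le (hφ.length_le _)

theorem Finite.exists_length_le [Finite A] (f : A → List B) : ∃ M, ∀ b, (f b).length ≤ M := by
  obtain ⟨M, hM⟩ := (Set.toFinite (Set.range fun b => (f b).length)).bddAbove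
  exact ⟨M, fun b => hM ⟨b, rfl⟩⟩

end Morphism

section Factors

variable {A B : Type*}

theorem List.infix_append_or_infix_append {u s t r : List A} (h : u <:+: s ++ t ++ r)
    (hu : u.length ≤ t.length) : u <:+: s ++ t ∨ u <:+: t ++ r := by
  obtain ⟨x, y, hxy⟩ := h
  rw [List.append_assoc x, List.append_assoc s, List.append_eq_append_iff] at hxy
  rcases hxy with ⟨s', rfl, hs'⟩ | ⟨x', rfl, hx'⟩
  · have hpre : u <+: s' ++ t := List.prefix_of_prefix_length_le ⟨y, by simp [hs']⟩
      (List.prefix_append _ r) (by simp only [List.length_append]; omega)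
    exact .inl (hpre.isInfix.trans ⟨x, [], by simp⟩)
  · exact .inr ⟨x', y, by simp [hx']⟩

theorem exists_infix_length_le_two_of_infix_applyMorph {f : A → List B} {u : List B}
    (hu : ∀ b, u.length ≤ (f b).length) {w : List A} (h : u <:+: applyMorph f w) :
    ∃ v, v <:+: w ∧ v.length ≤ 2 ∧ u <:+: applyMorph f v := by
  induction w with
  | nil => exact ⟨[], List.infix_rfl, by simp, h⟩
  | cons b w ih =>
    cases w with
    | nil => exact ⟨[b], List.infix_rfl, by simp, h⟩
    | cons c w =>
      rw [applyMorph_cons, applyMorph_cons, ← List.append_assoc] at h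
      rcases List.infix_append_or_infix_append h (hu c) with h | h
      · exact ⟨[b, c], ⟨[], w, rfl⟩, le_rfl, by simpa using h⟩
      · obtain ⟨v, hv, hv2, huv⟩ := ih (by simpa using h)
        exact ⟨v, List.infix_cons hv, hv2, huv⟩

theorem exists_image_infix_of_prefix_applyMorph {f : A → List B} {m : ℕ}
    (hm : ∀ b, (f b).length ≤ m) {u : List B} (hu : 2 * m < u.length) {w : List A} {x : List B}
    (h : x ++ u <+: applyMorph f w) : ∃ b ∈ w, f b <:+: u := by
  induction w generalizing x with
  | nil =>
    obtain ⟨-, rfl⟩ : x = [] ∧ u = [] := by simpa using h.length_le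
    simp at hu
  | cons b w ih =>
    rw [applyMorph_cons] at h
    by_cases hx : (f b).length ≤ x.length
    · obtain ⟨x', rfl⟩ : f b <+: x :=
        List.prefix_of_prefix_length_le (List.prefix_append _ _)
          ((List.prefix_append x u).trans h) hx
      obtain ⟨c, hc, hcu⟩ := ih (by simpa using h)
      exact ⟨c, List.mem_cons_of_mem b hc, hcu⟩
    · cases w with
      | nil =>
        have := h.length_le
        simp only [List.length_append, applyMorph_nil, List.append_nil] at this
        linarith [hm b]
      | cons c w =>
        have hbc : f b ++ f c <+: x ++ u :=
          List.prefix_of_prefix_length_le (by simp) h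
            (by simp only [List.length_append]; linarith [hm b, hm c])
        obtain ⟨z, hz⟩ : x <+: f b :=
          List.prefix_of_prefix_length_le (List.prefix_append _ _)
            ((List.prefix_append _ (f c)).trans hbc) (by omega)
        rw [← hz, List.append_assoc, List.prefix_append_right_inj] at hbc
        exact ⟨c, by simp, (List.infix_append z (f c) []).trans (by simpa using hbc.isInfix)⟩

theorem exists_image_infix_of_infix_applyMorph {f : A → List B} {m : ℕ}
    (hm : ∀ b, (f b).length ≤ m) {u : List B} (hu : 2 * m < u.length) {w : List A}
    (h : u <:+: applyMorph f w) : ∃ b ∈ w, f b <:+: u := by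
  obtain ⟨x, y, hxy⟩ := h
  exact exists_image_infix_of_prefix_applyMorph hm hu ⟨y, hxy⟩

theorem OccursAt.infix_of_prefixOf {W : ℕ → B} {u w : List B} {q : ℕ} (hu : OccursAt u W q)
    (hw : PrefixOf w W) (hle : q + u.length ≤ w.length) : u <:+: w := by
  have hdrop : (w.drop q).take u.length = u := by
    refine List.ext_getElem (by simp only [List.length_take, List.length_drop]; omega)
      fun r h₁ h₂ => ?_
    have h := hw (q + r) (by omega)
    simp only [zero_add, List.get_eq_getElem] at h
    simp [← h, hu r h₂]
  exact hdrop ▸ (List.take_prefix _ _).isInfix.trans (List.drop_suffix _ _).isInfix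

theorem OccursAt.of_append {W : ℕ → B} {x v y : List B} {i : ℕ}
    (h : OccursAt (x ++ v ++ y) W i) : OccursAt v W (i + x.length) := by
  intro r hr
  have := h (x.length + r) (by simp only [List.length_append]; omega)
  simp only [List.get_eq_getElem] at this ⊢
  rw [add_assoc, this, List.getElem_append_left (by simp only [List.length_append]; omega),
    List.getElem_append_right (by omega)]
  simp

theorem OccursAt.apply_add_eq {W : ℕ → B} {u : List B} {i j r : ℕ} (hi : OccursAt u W i)
    (hj : OccursAt u W j) (hr : r < u.length) : W (i + r) = W (j + r) := by
  rw [hi r hr, hj r hr]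

theorem occursAt_ofFn (W : ℕ → B) (p m : ℕ) :
    OccursAt (List.ofFn fun r : Fin m => W (p + r)) W p := by
  intro r hr
  simp

theorem apply_add_eq_self_of_occursAt {W : ℕ → B} {u : List B} {i t : ℕ} (hi : OccursAt u W i)
    (ht : OccursAt u W (i + t)) (hwin : ∀ p, (List.ofFn fun r : Fin (t + 1) => W (p + r)) <:+: u)
    (p : ℕ) : W (p + t) = W p := by
  obtain ⟨x, y, hxy⟩ := hwin p
  have hlen : x.length + (t + 1) ≤ u.length := by simp [← hxy]
  have hx : OccursAt _ W (i + x.length) := (hxy ▸ hi).of_append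
  have hp := occursAt_ofFn W p (t + 1)
  calc W (p + t) = W (i + x.length + t) := hp.apply_add_eq hx (by simp)
    _ = W (i + t + x.length) := by ring_nf
    _ = W (i + x.length) := ht.apply_add_eq hi (by omega)
    _ = W p := (hp.apply_add_eq hx (r := 0) (by simp)).symm

end Factors

section Primitive

variable {A : Type*} {φ : A → List A}

theorem PrimitiveSubst.exists_length_iterate_le [Finite A] (hprim : PrimitiveSubst φ) :
    ∃ D, ∀ n b c, ((applyMorph φ)^[n] [b]).length ≤ D * ((applyMorph φ)^[n] [c]).length := by
  obtain ⟨k, -, hk⟩ := hprim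
  obtain ⟨M, hM⟩ := Finite.exists_length_le φ
  refine ⟨M ^ k, fun n b c => ?_⟩
  calc ((applyMorph φ)^[n] [b]).length ≤ ((applyMorph φ)^[n + k] [c]).length := by
        rw [Function.iterate_add_apply]
        exact (iterate_applyMorph_infix φ n ((List.singleton_infix_iff _ _).2 (hk c b))).length_le
    _ ≤ M ^ k * ((applyMorph φ)^[n] [c]).length := by
        rw [add_comm, Function.iterate_add_apply]
        exact length_iterate_applyMorph_le hM k _

theorem PrimitiveSubst.eventually_infix_iterate (hprim : PrimitiveSubst φ) (hφ : Nonerasing φ)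
    {v : List A} {m : ℕ} {c : A} (h : v <:+: (applyMorph φ)^[m] [c]) :
    ∀ᶠ K in Filter.atTop, ∀ b, v <:+: (applyMorph φ)^[K] [b] := by
  obtain ⟨k, -, hk⟩ := hprim
  filter_upwards [Filter.eventually_ge_atTop (m + k)] with K hK b
  obtain ⟨d, hd⟩ :=
    List.exists_mem_of_ne_nil _ (hφ.iterate_ne_nil (K - (m + k)) (List.cons_ne_nil b []))
  have hcd : (applyMorph φ)^[m] [c] <:+: (applyMorph φ)^[m + k] [d] := by
    rw [Function.iterate_add_apply]
    exact iterate_applyMorph_infix φ m ((List.singleton_infix_iff _ _).2 (hk d c))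
  have hdb : (applyMorph φ)^[m + k] [d] <:+: (applyMorph φ)^[K] [b] := by
    have := iterate_applyMorph_infix φ (m + k) ((List.singleton_infix_iff _ _).2 hd)
    rwa [← Function.iterate_add_apply, Nat.add_sub_cancel' hK] at this
  exact h.trans (hcd.trans hdb)

theorem PrimitiveSubst.exists_forall_infix_iterate [Finite A] (hprim : PrimitiveSubst φ)
    (hφ : Nonerasing φ) (N : ℕ) :
    ∃ K, ∀ v m c, v.length ≤ N → v <:+: (applyMorph φ)^[m] [c] →
      ∀ b, v <:+: (applyMorph φ)^[K] [b] := by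
  have hfin : {v : List A | v.length ≤ N ∧ ∃ m c, v <:+: (applyMorph φ)^[m] [c]}.Finite :=
    (List.finite_length_le A N).subset fun v hv => hv.1
  obtain ⟨K, hK⟩ := ((Filter.eventually_all_finite hfin).2
    fun v ⟨_, m, c, h⟩ => hprim.eventually_infix_iterate hφ h).exists
  exact ⟨K, fun v m c hv h => hK v ⟨hv, m, c, h⟩⟩

end Primitive

section Morphic

variable {A B : Type*} {φ : A → List A} {ψ : A → List B}

def blockMorph (φ : A → List A) (ψ : A → List B) (n : ℕ) (b : A) : List B :=
  applyMorph ψ ((applyMorph φ)^[n] [b])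

theorem applyMorph_blockMorph (n : ℕ) (w : List A) :
    applyMorph (blockMorph φ ψ n) w = applyMorph ψ ((applyMorph φ)^[n] w) := by
  rw [iterate_applyMorph, applyMorph_applyMorph]
  rfl

theorem blockMorph_add (n m : ℕ) (b : A) :
    blockMorph φ ψ (n + m) b = applyMorph (blockMorph φ ψ n) ((applyMorph φ)^[m] [b]) := by
  rw [applyMorph_blockMorph, blockMorph, Function.iterate_add_apply]

theorem exists_length_blockMorph_le [Finite A] (hprim : PrimitiveSubst φ) (hψ : Nonerasing ψ) :
    ∃ D, ∀ n b c, (blockMorph φ ψ n b).length ≤ D * (blockMorph φ ψ n c).length := by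
  obtain ⟨D, hD⟩ := hprim.exists_length_iterate_le
  obtain ⟨M, hM⟩ := Finite.exists_length_le ψ
  refine ⟨M * D, fun n b c => ?_⟩
  calc (blockMorph φ ψ n b).length ≤ M * ((applyMorph φ)^[n] [b]).length :=
        length_applyMorph_le hM _
    _ ≤ M * (D * ((applyMorph φ)^[n] [c]).length) := Nat.mul_le_mul_left M (hD n b c)
    _ ≤ M * (D * (blockMorph φ ψ n c).length) := by gcongr; exact hψ.length_le _
    _ = M * D * (blockMorph φ ψ n c).length := (mul_assoc _ _ _).symm

/-- Take the least `n` at which all blocks reach length `ℓ`: some block of level `n - 1` is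
shorter than `ℓ`, so by the bounded ratios all of them are shorter than `D * ℓ`. -/
theorem exists_forall_length_blockMorph_mem_Icc [Finite A] (hprim : PrimitiveSubst φ)
    (hψ : Nonerasing ψ) {a : A} (hgrow : ∀ N, ∃ n, N ≤ (blockMorph φ ψ n a).length) :
    ∃ C, ∀ ℓ, 0 < ℓ → ∃ n, ∀ b, (blockMorph φ ψ n b).length ∈ Set.Icc ℓ (C * ℓ) := by
  obtain ⟨D, hD⟩ := exists_length_blockMorph_le hprim hψ
  obtain ⟨Mφ, hMφ⟩ := Finite.exists_length_le φ
  obtain ⟨Mψ, hMψ⟩ := Finite.exists_length_le ψ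
  refine ⟨Mψ + D * Mφ, fun ℓ hℓ => ?_⟩
  classical
  have hex : ∃ n, ∀ b, ℓ ≤ (blockMorph φ ψ n b).length := by
    obtain ⟨n, hn⟩ := hgrow (D * ℓ + 1)
    exact ⟨n, fun b => (Nat.lt_of_mul_lt_mul_left (hn.trans (hD n a b))).le⟩
  refine ⟨Nat.find hex, fun b => ⟨Nat.find_spec hex b, ?_⟩⟩
  rcases h : Nat.find hex with _ | n
  · simp only [blockMorph, Function.iterate_zero, id, applyMorph_singleton]
    exact (hMψ b).trans (by nlinarith [Nat.zero_le (D * Mφ * ℓ)])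
  · obtain ⟨c, hc⟩ : ∃ c, (blockMorph φ ψ n c).length < ℓ := by
      simpa using Nat.find_min hex (h ▸ n.lt_succ_self)
    have hn : ∀ d, (blockMorph φ ψ n d).length ≤ D * ℓ := fun d =>
      (hD n d c).trans (Nat.mul_le_mul_left D hc.le)
    calc (blockMorph φ ψ (n + 1) b).length ≤ D * ℓ * (φ b).length := by
          rw [blockMorph_add]
          simpa using length_applyMorph_le hn _
      _ ≤ D * ℓ * Mφ := Nat.mul_le_mul_left _ (hMφ b)
      _ ≤ (Mψ + D * Mφ) * ℓ := by nlinarith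

theorem IsMorphicWord.exists_infix_blockMorph {a : A} {H : ℕ → B} (hH : IsMorphicWord φ ψ a H)
    (hprim : PrimitiveSubst φ) (hφ : Nonerasing φ) {u : List B} (hu : FactorOf u H) (n : ℕ) :
    ∃ m, u <:+: applyMorph (blockMorph φ ψ n) ((applyMorph φ)^[m] [a]) := by
  obtain ⟨q, hq⟩ := hu
  obtain ⟨p, hp⟩ := hH.1 (q + u.length)
  obtain ⟨K, hK, hnK⟩ := ((hprim.eventually_infix_iterate hφ
    (List.infix_refl ((applyMorph φ)^[p] [a]))).and (Filter.eventually_ge_atTop n)).exists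
  refine ⟨K - n, (hq.infix_of_prefixOf (hH.2 p) hp).trans ?_⟩
  rw [applyMorph_blockMorph, ← Function.iterate_add_apply, Nat.add_sub_cancel' hnK]
  exact applyMorph_infix (hK a)

def LinearlyRecurrent (W : ℕ → B) (P : ℕ) : Prop :=
  ∀ u₁ u₂ : List B, FactorOf u₁ W → FactorOf u₂ W → P * u₁.length ≤ u₂.length → u₁ <:+: u₂

theorem IsMorphicWord.linearlyRecurrent [Finite A] {a : A} {H : ℕ → B}
    (hH : IsMorphicWord φ ψ a H) (hφ : Nonerasing φ) (hψ : Nonerasing ψ)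
    (hprim : PrimitiveSubst φ) : ∃ P, 0 < P ∧ LinearlyRecurrent H P := by
  obtain ⟨C, hC⟩ := exists_forall_length_blockMorph_mem_Icc hprim hψ hH.1
  obtain ⟨K, hK⟩ := hprim.exists_forall_infix_iterate hφ 2
  obtain ⟨M, hM⟩ := Finite.exists_length_le φ
  refine ⟨2 * (C * M ^ K) + 1, by omega, fun u₁ u₂ h₁ h₂ hle => ?_⟩
  rcases Nat.eq_zero_or_pos u₁.length with h0 | hℓ
  · rw [List.length_eq_zero_iff.1 h0]
    exact List.nil_infix
  obtain ⟨n, hn⟩ := hC u₁.length hℓ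
  have hin : ∀ b, u₁ <:+: blockMorph φ ψ (n + K) b := by
    intro b
    obtain ⟨m, hm⟩ := hH.exists_infix_blockMorph hprim hφ h₁ n
    obtain ⟨v, hv, hv2, huv⟩ :=
      exists_infix_length_le_two_of_infix_applyMorph (fun b => (hn b).1) hm
    rw [blockMorph_add]
    exact huv.trans (applyMorph_infix (hK v m a hv2 hv b))
  have hshort : ∀ b, (blockMorph φ ψ (n + K) b).length ≤ C * M ^ K * u₁.length := by
    intro b
    rw [blockMorph_add, mul_right_comm]
    refine (length_applyMorph_le (fun c => (hn c).2) _).trans (Nat.mul_le_mul_left _ ?_)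
    simpa using length_iterate_applyMorph_le hM K [b]
  obtain ⟨m, hm⟩ := hH.exists_infix_blockMorph hprim hφ h₂ (n + K)
  obtain ⟨b, -, hb⟩ := exists_image_infix_of_infix_applyMorph hshort (by nlinarith) hm
  exact (hin b).trans hb

theorem LinearlyRecurrent.length_le_of_occursAt {W : ℕ → B} {P : ℕ} (hW : LinearlyRecurrent W P)
    (hnp : ¬ EventuallyPeriodic W) {u : List B} {i t : ℕ} (hi : OccursAt u W i)
    (ht : OccursAt u W (i + t)) (ht0 : t ≠ 0) : u.length ≤ 2 * P * t := by
  by_contra! hlt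
  refine hnp ⟨0, t, by omega, fun p _ => apply_add_eq_self_of_occursAt hi ht (fun q => ?_) p⟩
  refine hW _ u ⟨q, occursAt_ofFn W q (t + 1)⟩ ⟨i, hi⟩ ?_
  rw [List.length_ofFn]
  have : 1 ≤ t := Nat.one_le_iff_ne_zero.2 ht0
  nlinarith

end Morphic

theorem primitive_word_linear_recurrence_constants_general {A B : Type*} [Fintype A]
    (φ : A → List A) (a : A) (ψ : A → List B)
    (hneφ : Nonerasing φ) (hneψ : Nonerasing ψ)
    (hprim : PrimitiveSubst φ)
    (H : ℕ → B) (hH : IsMorphicWord φ ψ a H)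
    (hnp : ¬ EventuallyPeriodic H) :
    ∃ P K : ℝ, 1 ≤ P ∧ 0 < K ∧ K < 1 ∧
      (∀ u₁ u₂ : List B, FactorOf u₁ H → FactorOf u₂ H →
        P * (u₁.length : ℝ) ≤ (u₂.length : ℝ) → u₁ <:+: u₂) ∧
      (∀ u : List B, ∀ i j : ℕ, OccursAt u H i → OccursAt u H j → i ≠ j →
        K * (u.length : ℝ) ≤ |(i : ℝ) - (j : ℝ)|) := by
  obtain ⟨P, hP0, hP⟩ := hH.linearlyRecurrent hneφ hneψ hprim
  have hP1 : (1 : ℝ) ≤ P := by exact_mod_cast hP0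
  refine ⟨P, 1 / (2 * P), hP1, by positivity, by rw [div_lt_one (by positivity)]; linarith,
    fun u₁ u₂ h₁ h₂ hle => hP u₁ u₂ h₁ h₂ (by exact_mod_cast hle), ?_⟩
  intro u i j hi hj hij
  wlog hlt : i < j generalizing i j
  · rw [abs_sub_comm]
    exact this j i hj hi hij.symm (by omega)
  obtain ⟨t, rfl⟩ := Nat.exists_eq_add_of_le hlt.le
  have hlen : (u.length : ℝ) ≤ 2 * P * t := by
    exact_mod_cast hP.length_le_of_occursAt hnp hi hj (by omega)
  rw [Nat.cast_add, sub_add_cancel_left, abs_neg, Nat.abs_cast, div_mul_eq_mul_div, one_mul,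
    div_le_iff₀ (by positivity)]
  linarith

/-- a non eventually periodic primitive morphic word is linearly
recurrent in the sense of the two constants `P`, `K` of the paper. -/
theorem primitive_word_linear_recurrence_constants {A B : Type*} [Fintype A]
    (φ : A → List A) (a : A) (ψ : A → List B)
    (hneφ : Nonerasing φ) (hneψ : Nonerasing ψ)
    (hprim : PrimitiveSubst φ) (hpro : Prolongable φ a)
    (H : ℕ → B) (hH : IsMorphicWord φ ψ a H)
    (hnp : ¬ EventuallyPeriodic H) :
    ∃ P K : ℝ, 1 ≤ P ∧ 0 < K ∧ K < 1 ∧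
      (∀ u₁ u₂ : List B, FactorOf u₁ H → FactorOf u₂ H →
        P * (u₁.length : ℝ) ≤ (u₂.length : ℝ) → u₁ <:+: u₂) ∧
      (∀ u : List B, ∀ i j : ℕ, OccursAt u H i → OccursAt u H j → i ≠ j →
        K * (u.length : ℝ) ≤ |(i : ℝ) - (j : ℝ)|) :=
  primitive_word_linear_recurrence_constants_general φ a ψ hneφ hneψ hprim H hH hnp
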